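/- In the pruned token CoMDP, the positive-threshold level is independent of the token: for any belief support B and any α, β ∈ B, the least resource level from which a safe positive-goal policy exists from (B, α) equals the one from (B, β). -/

import Mathlib

open Classical Finset Filter
attribute [local instance] Classical.propDecidable

noncomputable section

variable {S A Ω : Type*} [Fintype S] [DecidableEq S] [Fintype A] [Fintype Ω]

/-- A consumption POMDP: probabilistic transitions `δ`, probabilistic
observations `obs`, consumption `γ`, reload states `R`, capacity `cap` and
(absorbing, observable) goal states `Goal`. -/
structure CoPOMDP (S A Ω : Type*) [Fintype S] [Fintype Ω] where
  δ : S → A → S → ℝ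
  δ_nonneg : ∀ s a t, 0 ≤ δ s a t
  δ_sum : ∀ s a, ∑ t, δ s a t = 1
  obs : S → Ω → ℝ
  obs_nonneg : ∀ s o, 0 ≤ obs s o
  obs_sum : ∀ s, ∑ o, obs s o = 1
  γ : S → A → ℕ
  R : Set S
  cap : ℕ
  Goal : Set S

namespace CoPOMDP

/-- Resource update: consumption is subtracted (after reloading to `cap` in
reload states); `⊥` marks exhaustion and is absorbing. -/
def resup (M : CoPOMDP S A Ω) (ℓ : WithBot ℕ) (s : S) (a : A) : WithBot ℕ :=
  ℓ.recBotCoe ⊥ fun n =>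
    if s ∈ M.R then (if M.γ s a ≤ M.cap then ((M.cap - M.γ s a : ℕ) : WithBot ℕ) else ⊥)
    else (if M.γ s a ≤ n then ((n - M.γ s a : ℕ) : WithBot ℕ) else ⊥)

/-- A history: the initial observation and resource level, followed by the
sequence of actions, observations and resource levels witnessed so far. -/
structure Hist (A Ω : Type*) where
  o0 : Ω
  l0 : WithBot ℕ
  steps : List (A × Ω × WithBot ℕ)

/-- The last resource level of a history. -/
def Hist.lastLev (h : Hist A Ω) : WithBot ℕ :=
  (h.steps.getLast?).elim h.l0 (fun x => x.2.2)

/-- Extending a history by an action, an observation and a new resource level. -/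
def Hist.ext (h : Hist A Ω) (a : A) (o : Ω) (ℓ : WithBot ℕ) : Hist A Ω :=
  ⟨h.o0, h.l0, h.steps ++ [(a, o, ℓ)]⟩

/-- A (randomized, history-dependent) policy. -/
abbrev Pol (A Ω : Type*) := Hist A Ω → A → ℝ

/-- `π` is a genuine policy: it assigns a probability distribution on actions
to every history. -/
def IsPol (π : Pol A Ω) : Prop := (∀ h a, 0 ≤ π h a) ∧ ∀ h, ∑ a, π h a = 1

/-- Histories (together with the hidden current state) that occur with positive
probability under policy `π`, when the initial state is sampled from `ι` and
the initial resource level is `ℓ0`. -/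
inductive Reach (M : CoPOMDP S A Ω) (ι : S → ℝ) (ℓ0 : WithBot ℕ) (π : Pol A Ω) :
    Hist A Ω → S → Prop
  | init {s o} : 0 < ι s → 0 < M.obs s o → Reach M ι ℓ0 π ⟨o, ℓ0, []⟩ s
  | step {h s a t o} : Reach M ι ℓ0 π h s → 0 < π h a → 0 < M.δ s a t →
      0 < M.obs t o → Reach M ι ℓ0 π (h.ext a o (M.resup h.lastLev s a)) t

/-- A policy is safe if with probability 1 (equivalently, along every
positive-probability history) the resource level never becomes `⊥`. -/
def Safe (M : CoPOMDP S A Ω) (ι : S → ℝ) (ℓ0 : WithBot ℕ) (π : Pol A Ω) : Prop :=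
  ∀ h s, Reach M ι ℓ0 π h s → h.lastLev ≠ ⊥

/-- Probability of reaching a goal state within `n` more steps, given history
`h` and hidden current state `s`, under policy `π`. -/
def reachP (M : CoPOMDP S A Ω) (π : Pol A Ω) : ℕ → Hist A Ω → S → ℝ
  | 0, _, s => if s ∈ M.Goal then 1 else 0
  | n + 1, h, s =>
    if s ∈ M.Goal then 1 else
      ∑ a, π h a * ∑ t, M.δ s a t * ∑ o, M.obs t o *
        M.reachP π n (h.ext a o (M.resup h.lastLev s a)) t

/-- Probability of reaching a goal state within `n` steps from the initial
distribution `ι` with initial resource level `ℓ0`. -/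
def reachP0 (M : CoPOMDP S A Ω) (ι : S → ℝ) (ℓ0 : WithBot ℕ) (π : Pol A Ω)
    (n : ℕ) : ℝ :=
  ∑ s, ι s * ∑ o, M.obs s o * M.reachP π n ⟨o, ℓ0, []⟩ s

/-- A goal policy: reaches a goal state with probability 1. -/
def ASGoal (M : CoPOMDP S A Ω) (ι : S → ℝ) (ℓ0 : WithBot ℕ) (π : Pol A Ω) : Prop :=
  Tendsto (fun n => M.reachP0 ι ℓ0 π n) atTop (nhds 1)

/-- A positive-goal policy: reaches a goal state with probability `≥ ε` for
some `ε > 0`. -/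
def PosGoal (M : CoPOMDP S A Ω) (ι : S → ℝ) (ℓ0 : WithBot ℕ) (π : Pol A Ω) : Prop :=
  ∃ ε > (0 : ℝ), ∃ n, ε ≤ M.reachP0 ι ℓ0 π n

/-- The uniform distribution over a finite set of states. -/
def unif (B : Finset S) : S → ℝ := fun s => if s ∈ B then ((B.card : ℝ))⁻¹ else 0

/-- The threshold level of a belief support `B`: the least resource level `ℓ`
such that a safe goal policy exists from the uniform distribution over `B` with
initial resource level `ℓ` (`∞` if none exists). -/
def Thr (M : CoPOMDP S A Ω) (B : Finset S) : ℕ∞ :=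
  sInf {e : ℕ∞ | ∃ ℓ : ℕ, e = (ℓ : ℕ∞) ∧ ∃ π : Pol A Ω, IsPol π ∧
    M.Safe (unif B) (ℓ : WithBot ℕ) π ∧ M.ASGoal (unif B) (ℓ : WithBot ℕ) π}

/-- The belief support after the initial observation `o`. -/
def belief0 (M : CoPOMDP S A Ω) (ι : S → ℝ) (o : Ω) : Finset S :=
  univ.filter fun s => 0 < ι s ∧ 0 < M.obs s o

/-- One-step belief support update: the states that can emit the new
observation `o` and are successors of a state of `B` conforming to the
witnessed resource levels. -/
def beliefUpd (M : CoPOMDP S A Ω) (B : Finset S) (ℓprev : WithBot ℕ) (a : A)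
    (o : Ω) (ℓ : WithBot ℕ) : Finset S :=
  univ.filter fun t => 0 < M.obs t o ∧
    ∃ s ∈ B, 0 < M.δ s a t ∧ (ℓprev = ⊥ ∨ M.resup ℓprev s a = ℓ)

/-- Belief support after processing a list of steps. -/
def beliefAux (M : CoPOMDP S A Ω) (B : Finset S) (ℓ : WithBot ℕ) :
    List (A × Ω × WithBot ℕ) → Finset S
  | [] => B
  | (a, o, ℓ') :: rest => M.beliefAux (M.beliefUpd B ℓ a o ℓ') ℓ' rest

/-- The belief support of a history. -/
def belief (M : CoPOMDP S A Ω) (ι : S → ℝ) (h : Hist A Ω) : Finset S :=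
  M.beliefAux (M.belief0 ι h.o0) h.l0 h.steps

end CoPOMDP

/-! ### Consumption MDPs with a variable reload set, and the token CoMDP -/

/-- A consumption MDP (on state space `T`); the reload set is kept as a field
but safety and threshold levels below are parametrized by a reload set, so
that reload states can be pruned. -/
structure CoMDP (T A : Type*) [Fintype T] where
  δ : T → A → T → ℝ
  γ : T → A → ℕ
  R : Set T
  cap : ℕ
  Goal : Set T

namespace CoMDP

variable {T : Type*} [Fintype T]

/-- Resource update with reload set `Rel`. -/
def resupW (N : CoMDP T A) (Rel : Set T) (ℓ : WithBot ℕ) (t : T) (a : A) : WithBot ℕ :=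
  ℓ.recBotCoe ⊥ fun n =>
    if t ∈ Rel then (if N.γ t a ≤ N.cap then ((N.cap - N.γ t a : ℕ) : WithBot ℕ) else ⊥)
    else (if N.γ t a ≤ n then ((n - N.γ t a : ℕ) : WithBot ℕ) else ⊥)

/-- A (deterministic, history-dependent) policy for a perfectly observable
consumption MDP. -/
abbrev PolC (T A : Type*) := List (T × WithBot ℕ) → T × WithBot ℕ → A

/-- Configurations (with their histories) reachable with positive probability
from `c0` under `π`, with reload set `Rel`. -/
inductive ReachW (N : CoMDP T A) (Rel : Set T) (π : PolC T A) (c0 : T × WithBot ℕ) :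
    List (T × WithBot ℕ) → T × WithBot ℕ → Prop
  | refl : ReachW N Rel π c0 [] c0
  | step {h c t} : ReachW N Rel π c0 h c → 0 < N.δ c.1 (π h c) t →
      ReachW N Rel π c0 (h ++ [c]) (t, N.resupW Rel c.2 c.1 (π h c))

/-- Safety (w.r.t. reload set `Rel`): the resource level never becomes `⊥`. -/
def SafeW (N : CoMDP T A) (Rel : Set T) (π : PolC T A) (c0 : T × WithBot ℕ) : Prop :=
  ∀ h c, ReachW N Rel π c0 h c → c.2 ≠ ⊥

/-- Probability of reaching a goal state within `n` steps. -/
def reachPW (N : CoMDP T A) (Rel : Set T) (π : PolC T A) :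
    ℕ → List (T × WithBot ℕ) → T × WithBot ℕ → ℝ
  | 0, _, c => if c.1 ∈ N.Goal then 1 else 0
  | n + 1, h, c =>
    if c.1 ∈ N.Goal then 1 else
      ∑ t, N.δ c.1 (π h c) t * N.reachPW Rel π n (h ++ [c]) (t, N.resupW Rel c.2 c.1 (π h c))

/-- A positive-goal policy: reaches the goal with probability `≥ ε` for some `ε > 0`. -/
def PosGoalW (N : CoMDP T A) (Rel : Set T) (π : PolC T A) (c0 : T × WithBot ℕ) : Prop :=
  ∃ ε > (0 : ℝ), ∃ n, ε ≤ N.reachPW Rel π n [] c0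

/-- The positive-threshold level of state `t` w.r.t. reload set `Rel`: the least
initial resource level from which a safe positive-goal policy exists (`∞` if none). -/
def TposW (N : CoMDP T A) (Rel : Set T) (t : T) : ℕ∞ :=
  sInf {e : ℕ∞ | ∃ ℓ : ℕ, e = (ℓ : ℕ∞) ∧ ∃ π : PolC T A,
    N.SafeW Rel π (t, (ℓ : WithBot ℕ)) ∧ N.PosGoalW Rel π (t, (ℓ : WithBot ℕ))}

/-- The pruned reload set: the greatest fixed point of removing, from the
current reload set, all reload states whose positive-threshold level is `∞`
(equivalently, the union of all reload sets `Rel ⊆ R` all of whose states have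
a finite positive-threshold level w.r.t. `Rel` itself). -/
def pruned (N : CoMDP T A) : Set T :=
  ⋃₀ {Rel : Set T | Rel ⊆ N.R ∧ ∀ r ∈ Rel, N.TposW Rel r ≠ ⊤}

end CoMDP

namespace CoPOMDP

/-- States of the token CoMDP: a belief support together with a token, which is
either a state of the belief support or the empty guess `ε` (modeled by `none`). -/
abbrev TState (S : Type*) := Finset S × Option S

/-- Successor states with positive probability. -/
def succS (M : CoPOMDP S A Ω) (s : S) (a : A) : Finset S :=
  univ.filter fun t => 0 < M.δ s a t

/-- Belief-support successors of `B` under `a`: for every observation `o`, the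
(nonempty) set of successors of states of `B` that can emit `o`. -/
def succB (M : CoPOMDP S A Ω) (B : Finset S) (a : A) : Finset (Finset S) :=
  ((univ : Finset Ω).image fun o =>
      univ.filter fun t => 0 < M.obs t o ∧ ∃ s ∈ B, 0 < M.δ s a t).filter
    fun B' => B'.Nonempty

/-- Successors in the token CoMDP: the belief support evolves as in the
CoPOMDP, and the token follows a transition when possible, otherwise it becomes
the empty guess `ε` (and `ε` stays `ε`). -/
def tokSucc (M : CoPOMDP S A Ω) : TState S → A → Finset (TState S)
  | (B, none), a => (M.succB B a).image fun B' => (B', (none : Option S))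
  | (B, some α), a => (M.succB B a).biUnion fun B' =>
      if ((M.succS α a) ∩ B').Nonempty then
        ((M.succS α a) ∩ B').image fun α' => (B', some α')
      else {(B', (none : Option S))}

/-- Consumption in the token CoMDP: the (by consistency common) consumption of
the states of the belief support. -/
def tokγ (M : CoPOMDP S A Ω) (x : TState S) (a : A) : ℕ :=
  if h : x.1.Nonempty then M.γ h.choose a else 0

/-- The token CoMDP of a CoPOMDP: transitions are uniform over the token
successors, reload states are the pairs whose whole belief support consists of
reload states, and goal states are the pairs whose belief support consists of
goal states. -/
def tokenCoMDP (M : CoPOMDP S A Ω) : CoMDP (TState S) A where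
  δ := fun x a y => if y ∈ M.tokSucc x a then ((M.tokSucc x a).card : ℝ)⁻¹ else 0
  γ := M.tokγ
  R := {x : TState S | ∀ s ∈ x.1, s ∈ M.R}
  cap := M.cap
  Goal := {x : TState S | ∀ s ∈ x.1, s ∈ M.Goal}

/-- Consistency: lookalike states (states that can emit a common observation
with positive probability) have equal consumption under every action. -/
def Consistent (M : CoPOMDP S A Ω) : Prop :=
  ∀ s t : S, (∃ o, 0 < M.obs s o ∧ 0 < M.obs t o) → ∀ a, M.γ s a = M.γ t a

end CoPOMDP

/-! A token state enters consumption, reloading, goal membership and the belief-support part of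
its successors only through its belief support. Hence a policy from `(B, α)` can be simulated
from `(B, β)`: the new policy keeps a shadow run of the old one agreeing with its own run on
belief supports and resource levels, and it tracks one fixed run of the old policy to the goal
step by step, which keeps the goal probability positive. The pruned reload set is closed under
changing tokens for the same reason, together with the fact that a run started in a reload state
only gains resource when it is given more reload states. -/

namespace CoMDP

section
variable {A T : Type*} [Fintype T] {N : CoMDP T A} {Rel Rel' : Set T}

theorem resupW_congr {x y : T} {a : A} (hγ : N.γ x a = N.γ y a) (hRel : x ∈ Rel ↔ y ∈ Rel')
    (ℓ : WithBot ℕ) : N.resupW Rel ℓ x a = N.resupW Rel' ℓ y a := by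
  cases ℓ <;> simp [resupW, hγ, hRel]

theorem resupW_le_resupW {x y : T} {a : A} {m n : WithBot ℕ} (hγ : N.γ x a = N.γ y a)
    (hRel : x ∈ Rel → y ∈ Rel') (hmn : m ≤ n) (hcap : x ∈ Rel ∨ m ≤ N.cap) :
    N.resupW Rel m x a ≤ N.resupW Rel' n y a := by
  induction m using WithBot.recBotCoe with
  | bot => exact bot_le
  | coe m =>
    obtain ⟨n, rfl⟩ := WithBot.ne_bot_iff_exists.1 (ne_bot_of_le_ne_bot WithBot.coe_ne_bot hmn)
    rw [WithBot.coe_le_coe] at hmn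
    simp only [Nat.cast_withBot, WithBot.coe_le_coe] at hcap
    by_cases hx : x ∈ Rel <;> by_cases hy : y ∈ Rel' <;>
      simp only [resupW, WithBot.recBotCoe_coe, hx, hy, hγ, if_true, if_false] <;>
      split_ifs <;> simp_all <;> omega

theorem resupW_le_cap {x : T} {a : A} {m : WithBot ℕ} (hcap : x ∈ Rel ∨ m ≤ N.cap) :
    N.resupW Rel m x a ≤ N.cap := by
  induction m using WithBot.recBotCoe with
  | bot => exact bot_le
  | coe m =>
    simp only [Nat.cast_withBot, WithBot.coe_le_coe] at hcap
    simp only [resupW, WithBot.recBotCoe_coe, Nat.cast_withBot]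
    split_ifs with hx <;> simp only [bot_le, WithBot.coe_le_coe]
    · omega
    · have := hcap.resolve_left hx
      omega

theorem reachPW_nonneg (hδ : ∀ x a y, 0 ≤ N.δ x a y) (π : PolC T A) :
    ∀ n h c, 0 ≤ N.reachPW Rel π n h c
  | 0, _, _ => by rw [reachPW]; split_ifs <;> norm_num
  | n + 1, _, _ => by
    rw [reachPW]
    split_ifs
    · exact zero_le_one
    · exact Finset.sum_nonneg fun t _ => mul_nonneg (hδ _ _ _) (reachPW_nonneg hδ π n _ _)

theorem exists_reachW_goal_of_reachPW_pos (hδ : ∀ x a y, 0 ≤ N.δ x a y) {π : PolC T A}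
    {c0 : T × WithBot ℕ} {h : List (T × WithBot ℕ)} {c : T × WithBot ℕ}
    (hr : ReachW N Rel π c0 h c) {n : ℕ} (hpos : 0 < N.reachPW Rel π n h c) :
    ∃ h' c', ReachW N Rel π c0 h' c' ∧ c'.1 ∈ N.Goal := by
  induction n generalizing h c with
  | zero => exact ⟨h, c, hr, by by_contra hg; simp [reachPW, hg] at hpos⟩
  | succ n ih =>
    by_cases hg : c.1 ∈ N.Goal
    · exact ⟨h, c, hr, hg⟩
    rw [reachPW, if_neg hg] at hpos
    obtain ⟨t, -, ht⟩ := Finset.exists_lt_of_sum_lt (f := fun _ => (0 : ℝ)) (by simpa using hpos)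
    have hδt := pos_of_mul_pos_left ht (reachPW_nonneg hδ π n _ _)
    exact ih (hr.step hδt) (pos_of_mul_pos_right ht hδt.le)

theorem exists_reachPW_pos_of_reachW (hδ : ∀ x a y, 0 ≤ N.δ x a y) {π : PolC T A}
    {c0 : T × WithBot ℕ} {h : List (T × WithBot ℕ)} {c : T × WithBot ℕ}
    (hr : ReachW N Rel π c0 h c) {m : ℕ} (hm : 0 < N.reachPW Rel π m h c) :
    ∃ n, 0 < N.reachPW Rel π n [] c0 := by
  induction hr generalizing m with
  | refl => exact ⟨m, hm⟩
  | @step h c t _ hδt ih =>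
    refine ih (m := m + 1) ?_
    rw [reachPW]
    split_ifs
    · exact zero_lt_one
    · exact Finset.sum_pos' (fun u _ => mul_nonneg (hδ _ _ _) (reachPW_nonneg hδ π m _ _))
        ⟨t, Finset.mem_univ t, mul_pos hδt hm⟩

theorem posGoalW_iff_exists_reachW_goal (hδ : ∀ x a y, 0 ≤ N.δ x a y) (π : PolC T A)
    (c0 : T × WithBot ℕ) :
    N.PosGoalW Rel π c0 ↔ ∃ h c, ReachW N Rel π c0 h c ∧ c.1 ∈ N.Goal := by
  constructor
  · rintro ⟨ε, hε, n, hn⟩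
    exact exists_reachW_goal_of_reachPW_pos hδ .refl (hε.trans_le hn)
  · rintro ⟨h, c, hr, hg⟩
    obtain ⟨n, hn⟩ := exists_reachPW_pos_of_reachW hδ hr (m := 0) (by simp [reachPW, hg])
    exact ⟨_, hn, n, le_rfl⟩

theorem tposW_le_tposW_of_forall {x y : T}
    (h : ∀ (ℓ : ℕ) (σ : PolC T A), N.SafeW Rel σ (x, ℓ) → N.PosGoalW Rel σ (x, ℓ) →
      ∃ π, N.SafeW Rel' π (y, ℓ) ∧ N.PosGoalW Rel' π (y, ℓ)) :
    N.TposW Rel' y ≤ N.TposW Rel x := by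
  refine sInf_le_sInf ?_
  rintro _ ⟨ℓ, rfl, σ, hs, hp⟩
  exact ⟨ℓ, rfl, h ℓ σ hs hp⟩

/-- `Sim c c'` pairs a configuration `c` of the simulating run (reload set `Rel'`) with a
configuration `c'` of the simulated run (reload set `Rel`). -/
structure IsSimulation (N : CoMDP T A) (Rel' Rel : Set T)
    (Sim : T × WithBot ℕ → T × WithBot ℕ → Prop) : Prop where
  ne_bot : ∀ {c c'}, Sim c c' → c'.2 ≠ ⊥ → c.2 ≠ ⊥
  mem_goal : ∀ {c c'}, Sim c c' → c'.1 ∈ N.Goal → c.1 ∈ N.Goal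
  forth : ∀ {c c' a t}, Sim c c' → 0 < N.δ c.1 a t → ∃ t', 0 < N.δ c'.1 a t' ∧
    Sim (t, N.resupW Rel' c.2 c.1 a) (t', N.resupW Rel c'.2 c'.1 a)
  back : ∀ {c c' a t'}, Sim c c' → 0 < N.δ c'.1 a t' → ∃ t, 0 < N.δ c.1 a t ∧
    Sim (t, N.resupW Rel' c.2 c.1 a) (t', N.resupW Rel c'.2 c'.1 a)

variable {Sim : T × WithBot ℕ → T × WithBot ℕ → Prop} {σ : PolC T A}
  {c0 c0' : T × WithBot ℕ} {p : List (T × WithBot ℕ)}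

/-- A `σ`-run related to the configuration `c` reached after `n` steps. The run `p` is preferred
whenever it fits: this is what lets the simulating policy follow `p` to the goal. -/
def shadow (N : CoMDP T A) (Rel : Set T) (Sim : T × WithBot ℕ → T × WithBot ℕ → Prop)
    (σ : PolC T A) (c0' : T × WithBot ℕ) (p : List (T × WithBot ℕ)) (n : ℕ)
    (c : T × WithBot ℕ) : List (T × WithBot ℕ) × (T × WithBot ℕ) :=
  if hp : ∃ s : List (T × WithBot ℕ) × (T × WithBot ℕ),
      (ReachW N Rel σ c0' s.1 s.2 ∧ Sim c s.2) ∧ s.1.length = n ∧ s.1 ++ [s.2] <+: p then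
    hp.choose
  else if hs : ∃ s : List (T × WithBot ℕ) × (T × WithBot ℕ),
      ReachW N Rel σ c0' s.1 s.2 ∧ Sim c s.2 then
    hs.choose
  else ([], c)

def simPol (N : CoMDP T A) (Rel : Set T) (Sim : T × WithBot ℕ → T × WithBot ℕ → Prop)
    (σ : PolC T A) (c0' : T × WithBot ℕ) (p : List (T × WithBot ℕ)) : PolC T A :=
  fun h c => σ (N.shadow Rel Sim σ c0' p h.length c).1 (N.shadow Rel Sim σ c0' p h.length c).2

theorem shadow_spec {n : ℕ} {c : T × WithBot ℕ}
    (hc : ∃ s : List (T × WithBot ℕ) × (T × WithBot ℕ), ReachW N Rel σ c0' s.1 s.2 ∧ Sim c s.2) :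
    ReachW N Rel σ c0' (N.shadow Rel Sim σ c0' p n c).1 (N.shadow Rel Sim σ c0' p n c).2 ∧
      Sim c (N.shadow Rel Sim σ c0' p n c).2 := by
  unfold shadow
  split_ifs with hp
  · exact hp.choose_spec.1
  · exact hc.choose_spec

theorem shadow_eq_of_prefix {h' : List (T × WithBot ℕ)} {c c' : T × WithBot ℕ}
    (hr : ReachW N Rel σ c0' h' c') (hsim : Sim c c') (hpre : h' ++ [c'] <+: p) :
    N.shadow Rel Sim σ c0' p h'.length c = (h', c') := by
  have hp : ∃ s : List (T × WithBot ℕ) × (T × WithBot ℕ),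
      (ReachW N Rel σ c0' s.1 s.2 ∧ Sim c s.2) ∧ s.1.length = h'.length ∧ s.1 ++ [s.2] <+: p :=
    ⟨(h', c'), ⟨hr, hsim⟩, rfl, hpre⟩
  rw [shadow, dif_pos hp]
  obtain ⟨-, hlen, hpre'⟩ := hp.choose_spec
  have heq : hp.choose.1 ++ [hp.choose.2] = h' ++ [c'] :=
    (List.prefix_of_prefix_length_le hpre' hpre (by simp [hlen])).eq_of_length (by simp [hlen])
  obtain ⟨h1, h2⟩ := List.append_inj' heq rfl
  exact Prod.ext h1 (List.singleton_inj.1 h2)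

namespace IsSimulation

theorem exists_shadow_of_reachW (hS : N.IsSimulation Rel' Rel Sim) (hinit : Sim c0 c0')
    {h : List (T × WithBot ℕ)} {c : T × WithBot ℕ}
    (hr : ReachW N Rel' (N.simPol Rel Sim σ c0' p) c0 h c) :
    ∃ s : List (T × WithBot ℕ) × (T × WithBot ℕ), ReachW N Rel σ c0' s.1 s.2 ∧ Sim c s.2 := by
  induction hr with
  | refl => exact ⟨([], c0'), .refl, hinit⟩
  | @step h c t _ hδ ih =>
    obtain ⟨hr', hsim⟩ := shadow_spec (n := h.length) (p := p) ih
    obtain ⟨t', hδ', hsim'⟩ := hS.forth hsim hδ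
    exact ⟨(_, (t', _)), hr'.step hδ', hsim'⟩

theorem exists_reachW_of_prefix (hS : N.IsSimulation Rel' Rel Sim) (hinit : Sim c0 c0')
    {h' : List (T × WithBot ℕ)} {c' : T × WithBot ℕ}
    (hr : ReachW N Rel σ c0' h' c') (hpre : h' ++ [c'] <+: p) :
    ∃ h c, ReachW N Rel' (N.simPol Rel Sim σ c0' p) c0 h c ∧ h.length = h'.length ∧ Sim c c' := by
  induction hr with
  | refl => exact ⟨[], c0, .refl, rfl, hinit⟩
  | @step h' c' t' hr' hδ' ih =>
    have hpre' : h' ++ [c'] <+: p := (List.prefix_append _ _).trans hpre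
    obtain ⟨h, c, hr, hlen, hsim⟩ := ih hpre'
    have hact : N.simPol Rel Sim σ c0' p h c = σ h' c' := by
      simp only [simPol, hlen, shadow_eq_of_prefix hr' hsim hpre']
    obtain ⟨t, hδ, hsim'⟩ := hS.back hsim hδ'
    have hstep := hr.step (t := t) (by rwa [hact])
    rw [hact] at hstep
    exact ⟨_, _, hstep, by simp [hlen], hsim'⟩

theorem exists_safeW_posGoalW (hS : N.IsSimulation Rel' Rel Sim) (hinit : Sim c0 c0')
    (hδ : ∀ x a y, 0 ≤ N.δ x a y) (hs : N.SafeW Rel σ c0')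
    (hp : N.PosGoalW Rel σ c0') : ∃ π, N.SafeW Rel' π c0 ∧ N.PosGoalW Rel' π c0 := by
  obtain ⟨hg, cg, hrg, hgoal⟩ := (posGoalW_iff_exists_reachW_goal hδ σ c0').1 hp
  refine ⟨N.simPol Rel Sim σ c0' (hg ++ [cg]), fun h c hr => ?_, ?_⟩
  · obtain ⟨s, hrs, hsim⟩ := hS.exists_shadow_of_reachW hinit hr
    exact hS.ne_bot hsim (hs _ _ hrs)
  · obtain ⟨h, c, hr, -, hsim⟩ := hS.exists_reachW_of_prefix hinit hrg (List.prefix_refl _)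
    exact (posGoalW_iff_exists_reachW_goal hδ _ c0).2 ⟨h, c, hr, hS.mem_goal hsim hgoal⟩

end IsSimulation

structure IsKeyBisimulation {K : Type*} (N : CoMDP T A) (key : T → K) : Prop where
  γ_eq : ∀ {x y}, key x = key y → ∀ a, N.γ x a = N.γ y a
  mem_goal : ∀ {x y}, key x = key y → x ∈ N.Goal → y ∈ N.Goal
  exists_succ : ∀ {x y a x'}, key x = key y → 0 < N.δ x a x' →
    ∃ y', 0 < N.δ y a y' ∧ key y' = key x'

namespace IsKeyBisimulation

variable {K : Type*} {key : T → K}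

theorem isSimulation (hN : N.IsKeyBisimulation key)
    (hkey : ∀ {c c'}, Sim c c' → key c.1 = key c'.1)
    (hbot : ∀ {c c'}, Sim c c' → c'.2 ≠ ⊥ → c.2 ≠ ⊥)
    (hstep : ∀ {c c' a t t'}, Sim c c' → key t = key t' →
      Sim (t, N.resupW Rel' c.2 c.1 a) (t', N.resupW Rel c'.2 c'.1 a)) :
    N.IsSimulation Rel' Rel Sim where
  ne_bot := hbot
  mem_goal h := hN.mem_goal (hkey h).symm
  forth h hδ :=
    let ⟨t', hδ', ht⟩ := hN.exists_succ (hkey h) hδ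
    ⟨t', hδ', hstep h ht.symm⟩
  back h hδ :=
    let ⟨t, hδ', ht⟩ := hN.exists_succ (hkey h).symm hδ
    ⟨t, hδ', hstep h ht⟩

theorem tposW_le_tposW (hN : N.IsKeyBisimulation key) (hδ : ∀ x a y, 0 ≤ N.δ x a y)
    (hRel : ∀ {x y}, key x = key y → x ∈ Rel → y ∈ Rel) {x y : T} (hxy : key x = key y) :
    N.TposW Rel y ≤ N.TposW Rel x := by
  refine CoMDP.tposW_le_tposW_of_forall fun ℓ σ hs hp => ?_
  have hS := hN.isSimulation (Rel := Rel) (Rel' := Rel)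
    (Sim := fun c c' => key c.1 = key c'.1 ∧ c.2 = c'.2) (fun h => h.1) (fun h hne => h.2 ▸ hne)
    (fun ⟨hk, hl⟩ ht => ⟨ht, hl ▸ resupW_congr (hN.γ_eq hk _) ⟨hRel hk, hRel hk.symm⟩ _⟩)
  exact hS.exists_safeW_posGoalW (c0 := (y, ℓ)) (c0' := (x, ℓ)) ⟨hxy.symm, rfl⟩ hδ hs hp

theorem tposW_eq (hN : N.IsKeyBisimulation key) (hδ : ∀ x a y, 0 ≤ N.δ x a y)
    (hRel : ∀ {x y}, key x = key y → x ∈ Rel → y ∈ Rel) {x y : T} (hxy : key x = key y) :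
    N.TposW Rel x = N.TposW Rel y :=
  le_antisymm (hN.tposW_le_tposW hδ hRel hxy.symm) (hN.tposW_le_tposW hδ hRel hxy)

/-- The invariant `c'.1 ∈ Rel ∨ c'.2 ≤ cap` of the shadow holds initially because `w ∈ Rel`, and
after every step; it ensures that a reload of the new run alone never leaves it below the shadow. -/
theorem tposW_le_tposW_of_mem (hN : N.IsKeyBisimulation key) (hδ : ∀ x a y, 0 ≤ N.δ x a y)
    (hRel : ∀ {x y}, key x = key y → x ∈ Rel → y ∈ Rel') {w z : T} (hw : w ∈ Rel)
    (hwz : key w = key z) : N.TposW Rel' z ≤ N.TposW Rel w := by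
  refine CoMDP.tposW_le_tposW_of_forall fun ℓ σ hs hp => ?_
  have hS := hN.isSimulation (Rel := Rel) (Rel' := Rel')
    (Sim := fun c c' => key c.1 = key c'.1 ∧ c'.2 ≤ c.2 ∧ (c'.1 ∈ Rel ∨ c'.2 ≤ N.cap))
    (fun h => h.1) (fun h hne => ne_bot_of_le_ne_bot hne h.2.1)
    (fun ⟨hk, hle, hcap⟩ ht => ⟨ht, resupW_le_resupW (hN.γ_eq hk.symm _) (hRel hk.symm) hle hcap,
      Or.inr (resupW_le_cap hcap)⟩)
  exact hS.exists_safeW_posGoalW (c0 := (z, ℓ)) (c0' := (w, ℓ)) ⟨hwz.symm, le_rfl, Or.inl hw⟩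
    hδ hs hp

theorem mem_pruned (hN : N.IsKeyBisimulation key) (hδ : ∀ x a y, 0 ≤ N.δ x a y)
    (hR : ∀ {x y}, key x = key y → x ∈ N.R → y ∈ N.R) {x y : T} (hxy : key x = key y)
    (hx : x ∈ N.pruned) : y ∈ N.pruned := by
  obtain ⟨Rel, ⟨hsub, hfin⟩, hxRel⟩ := hx
  set Sat := {z | ∃ w ∈ Rel, key w = key z}
  refine ⟨Sat, ⟨?_, ?_⟩, x, hxRel, hxy⟩
  · rintro z ⟨w, hw, hwz⟩
    exact hR hwz (hsub hw)
  · rintro z ⟨w, hw, hwz⟩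
    exact ne_top_of_le_ne_top (hfin w hw)
      (hN.tposW_le_tposW_of_mem (Rel' := Sat) hδ (fun hk hx => ⟨_, hx, hk⟩) hw hwz)

end IsKeyBisimulation

end
end CoMDP

namespace CoPOMDP

section
variable {S A Ω : Type*} [Fintype S] [DecidableEq S] [Fintype Ω] (M : CoPOMDP S A Ω)

theorem tokenCoMDP_δ_nonneg (x : TState S) (a : A) (y : TState S) :
    0 ≤ M.tokenCoMDP.δ x a y := by
  simp only [tokenCoMDP]
  split_ifs <;> positivity

theorem tokenCoMDP_δ_pos_iff {x y : TState S} {a : A} :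
    0 < M.tokenCoMDP.δ x a y ↔ y ∈ M.tokSucc x a := by
  simp only [tokenCoMDP]
  split_ifs with h
  · simp only [h, iff_true]
    exact inv_pos.2 (Nat.cast_pos.2 (Finset.card_pos.2 ⟨y, h⟩))
  · simpa using h

theorem fst_mem_succB_of_mem_tokSucc {x y : TState S} {a : A} (h : y ∈ M.tokSucc x a) :
    y.1 ∈ M.succB x.1 a := by
  obtain ⟨B, _ | α⟩ := x
  · obtain ⟨B', hB', rfl⟩ := Finset.mem_image.1 h
    exact hB'
  · obtain ⟨B', hB', hy⟩ := Finset.mem_biUnion.1 h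
    split_ifs at hy
    · obtain ⟨α', -, rfl⟩ := Finset.mem_image.1 hy
      exact hB'
    · rw [Finset.mem_singleton.1 hy]
      exact hB'

theorem exists_mem_tokSucc {x : TState S} {C : Finset S} {a : A} (hC : C ∈ M.succB x.1 a) :
    ∃ τ, (C, τ) ∈ M.tokSucc x a := by
  obtain ⟨B, _ | α⟩ := x
  · exact ⟨none, Finset.mem_image_of_mem _ hC⟩
  · by_cases hne : (M.succS α a ∩ C).Nonempty
    · obtain ⟨α', hα'⟩ := hne
      refine ⟨some α', Finset.mem_biUnion.2 ⟨C, hC, ?_⟩⟩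
      rw [if_pos ⟨α', hα'⟩]
      exact Finset.mem_image_of_mem _ hα'
    · refine ⟨none, Finset.mem_biUnion.2 ⟨C, hC, ?_⟩⟩
      rw [if_neg hne]
      exact Finset.mem_singleton_self _

theorem tokenCoMDP_isKeyBisimulation : M.tokenCoMDP.IsKeyBisimulation Prod.fst where
  γ_eq hxy _ := by simp only [tokenCoMDP, tokγ, hxy]
  mem_goal hxy hx := by simpa [tokenCoMDP, hxy] using hx
  exists_succ {x y a x'} hxy hδ := by
    obtain ⟨τ, hτ⟩ := M.exists_mem_tokSucc (x := y) (C := x'.1)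
      (hxy ▸ M.fst_mem_succB_of_mem_tokSucc ((M.tokenCoMDP_δ_pos_iff).1 hδ))
    exact ⟨(x'.1, τ), (M.tokenCoMDP_δ_pos_iff).2 hτ, rfl⟩

theorem mem_tokenCoMDP_pruned {x y : TState S} (hxy : x.1 = y.1)
    (hx : x ∈ M.tokenCoMDP.pruned) : y ∈ M.tokenCoMDP.pruned :=
  M.tokenCoMDP_isKeyBisimulation.mem_pruned M.tokenCoMDP_δ_nonneg
    (fun hk hx => by simpa [tokenCoMDP, hk] using hx) hxy hx

end

end CoPOMDP

theorem Tpos_token_independent_general (M : CoPOMDP S A Ω)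
    (B : Finset S) (α β : S) :
    (M.tokenCoMDP).TposW (M.tokenCoMDP).pruned (B, some α) =
      (M.tokenCoMDP).TposW (M.tokenCoMDP).pruned (B, some β) :=
  M.tokenCoMDP_isKeyBisimulation.tposW_eq M.tokenCoMDP_δ_nonneg M.mem_tokenCoMDP_pruned rfl

/-- in the pruned token CoMDP of a consistent CoPOMDP, the
positive-threshold level is independent of the token: for any belief support
`B` and tokens `α, β ∈ B`, the least resource level from which a safe
positive-goal policy exists from `(B, α)` equals the one from `(B, β)`. -/
theorem Tpos_token_independent (M : CoPOMDP S A Ω) (hcons : M.Consistent)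
    (B : Finset S) (α β : S) (hα : α ∈ B) (hβ : β ∈ B) :
    (M.tokenCoMDP).TposW (M.tokenCoMDP).pruned (B, some α) =
      (M.tokenCoMDP).TposW (M.tokenCoMDP).pruned (B, some β) :=
  Tpos_token_independent_general M B α β
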